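/- arXiv:1512.04740 — 5 statements merged into one kernel-verified Lean document; each statement's English description precedes it below -/
import Mathlib

section
/- Let H ∈ ℝ^{q×q} be nilpotent with H^{q*} = 0, P₂ ∈ ℝ^{q×r}, B ∈ ℝ^{r×r₁} with H·P₂·B = 0. Then for any input sequence U_k ∈ ℝ^{r₁} and V_k = B·U_k, the backward solution z_k = -∑_{i=0}^{q*-1} H^i P₂ V_{k+i} simplifies to z_k = -P₂·B·U_k; i.e., z_k depends only on the current input U_k and not on future inputs. -/
theorem stmt7 {q r r1 qs : ℕ} (H : Matrix (Fin q) (Fin q) ℝ)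
    (hnil : H ^ qs = 0)
    (P₂ : Matrix (Fin q) (Fin r) ℝ) (B : Matrix (Fin r) (Fin r1) ℝ)
    (hcaus : H * P₂ * B = 0)
    (U : ℕ → Fin r1 → ℝ) (V : ℕ → Fin r → ℝ) (hV : ∀ k, V k = B.mulVec (U k))
    (z : ℕ → Fin q → ℝ)
    (hz : ∀ k, z k = -∑ i ∈ Finset.range qs, (H ^ i).mulVec (P₂.mulVec (V (k + i)))) :
    ∀ k, z k = -(P₂ * B).mulVec (U k) := by
  intro k
  rcases qs with _ | n
  · -- qs = 0 : H^0 = 1 = 0, so the matrix ring is trivial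
    have h1 : (1 : Matrix (Fin q) (Fin q) ℝ) = 0 := by simpa using hnil
    have hPB : P₂ * B = 0 := by
      calc P₂ * B = (1 : Matrix (Fin q) (Fin q) ℝ) * (P₂ * B) :=
            (Matrix.one_mul _).symm
        _ = 0 := by rw [h1, Matrix.zero_mul]
    rw [hz, hPB]
    simp
  · rw [hz, Finset.sum_range_succ']
    have hzero : ∀ i ∈ Finset.range n,
        (H ^ (i + 1)).mulVec (P₂.mulVec (V (k + (i + 1)))) = 0 := by
      intro i _
      rw [hV, Matrix.mulVec_mulVec, Matrix.mulVec_mulVec, pow_succ,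
        Matrix.mul_assoc (H ^ i) H P₂, Matrix.mul_assoc (H ^ i) (H * P₂) B, hcaus, Matrix.mul_zero,
        Matrix.zero_mulVec]
    rw [Finset.sum_eq_zero hzero, zero_add]
    simp [hV, Matrix.mulVec_mulVec]
end

section
/- Consider the output X_k = C·Y_k with Y_k = Q_p J^k Z + Q_p ∑_{i=0}^{k-1} J^{k-i-1} P₁ B U_i − Q_q ∑_{i=0}^{q*-1} H^i P₂ B U_{k+i}. If C·Q_q·H^i·P₂·B = 0 for all i = 1, …, q*−1, then X_k = C Q_p J^k Z + C Q_p ∑_{i=0}^{k-1} J^{k-i-1} P₁ B U_i − C Q_q P₂ B U_k; in particular X_k depends only on Z and U_0, …, U_k. -/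
open Matrix Finset

theorem Matrix.mulVec_sum_pow_mulVec_eq_of_mul_pow_mul_eq_zero {α l m o : Type*} [Semiring α]
    [Fintype m] [DecidableEq m] [Fintype o] (A : Matrix l m α) (H : Matrix m m α)
    (M : Matrix m o α) {N : ℕ} (hN : H ^ N = 0) (hA : ∀ i, 1 ≤ i → i < N → A * H ^ i * M = 0)
    (u : ℕ → o → α) :
    A *ᵥ ∑ i ∈ range N, (H ^ i) *ᵥ (M *ᵥ u i) = (A * M) *ᵥ u 0 := by
  have hterm : ∀ i, A *ᵥ ((H ^ i) *ᵥ (M *ᵥ u i)) = (A * H ^ i * M) *ᵥ u i := fun i => by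
    simp only [mulVec_mulVec, Matrix.mul_assoc]
  rw [mulVec_sum, sum_eq_single 0]
  · rw [pow_zero, one_mulVec, mulVec_mulVec]
  · intro i hi hi0
    rw [hterm, hA i (Nat.one_le_iff_ne_zero.mpr hi0) (mem_range.mp hi), zero_mulVec]
  · intro h0
    obtain rfl : N = 0 := by simpa using h0
    rw [hterm, hN, Matrix.mul_zero, Matrix.zero_mul, zero_mulVec]

theorem stmt10 {n m p q r r1 qs : ℕ}
    (C : Matrix (Fin n) (Fin m) ℝ)
    (Qp : Matrix (Fin m) (Fin p) ℝ) (Qq : Matrix (Fin m) (Fin q) ℝ)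
    (J : Matrix (Fin p) (Fin p) ℝ)
    (H : Matrix (Fin q) (Fin q) ℝ) (hnil : H ^ qs = 0)
    (P₁ : Matrix (Fin p) (Fin r) ℝ) (P₂ : Matrix (Fin q) (Fin r) ℝ)
    (B : Matrix (Fin r) (Fin r1) ℝ)
    (Z : Fin p → ℝ) (U : ℕ → Fin r1 → ℝ)
    (Y : ℕ → Fin m → ℝ)
    (hY : ∀ k, Y k = Qp.mulVec ((J ^ k).mulVec Z)
        + Qp.mulVec (∑ i ∈ Finset.range k, (J ^ (k - i - 1)).mulVec ((P₁ * B).mulVec (U i)))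
        - Qq.mulVec (∑ i ∈ Finset.range qs, (H ^ i).mulVec ((P₂ * B).mulVec (U (k + i)))))
    (X : ℕ → Fin n → ℝ) (hX : ∀ k, X k = C.mulVec (Y k))
    (hcaus : ∀ i : ℕ, 1 ≤ i → i ≤ qs - 1 → C * (Qq * (H ^ i * P₂ * B)) = 0) :
    ∀ k, X k = (C * Qp).mulVec ((J ^ k).mulVec Z)
        + (C * Qp).mulVec (∑ i ∈ Finset.range k, (J ^ (k - i - 1)).mulVec ((P₁ * B).mulVec (U i)))
        - (C * Qq).mulVec ((P₂ * B).mulVec (U k)) := by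
  intro k
  have hcaus' : ∀ i, 1 ≤ i → i < qs → C * Qq * H ^ i * (P₂ * B) = 0 := fun i hi hiq => by
    simpa only [Matrix.mul_assoc] using hcaus i hi (Nat.le_sub_one_of_lt hiq)
  have hfuture := (C * Qq).mulVec_sum_pow_mulVec_eq_of_mul_pow_mul_eq_zero H (P₂ * B) hnil hcaus'
    (fun i => U (k + i))
  rw [← mulVec_mulVec, Nat.add_zero] at hfuture
  rw [hX, hY, mulVec_sub, mulVec_add, hfuture]
  simp only [mulVec_mulVec, Matrix.mul_assoc]
end

section
/- Let F, G ∈ ℝ^{m×m} with P F Q = diag(I_p, H), P G Q = diag(J, I_q) (P, Q invertible, H nilpotent with H^{q*} = 0). Write Q = [Q_p Q_q] by columns and P = [P₁; P₂] by rows. Then a sequence Y : ℕ → ℝ^m satisfies F Y_{k+1} = G Y_k + V_k for all k ≥ 0 if and only if there exists a sequence y : ℕ → ℝ^p and a sequence z : ℕ → ℝ^q with Y_k = Q_p y_k + Q_q z_k, y_{k+1} = J y_k + P₁ V_k, and H z_{k+1} = z_k + P₂ V_k for all k. -/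
/-!
Since `P` is invertible, substituting `Y = Q X` turns `F Y_{k+1} = G Y_k + V_k` into the
equivalent block-diagonal recursion `(P F Q) X_{k+1} = (P G Q) X_k + P V_k`, which splits along
`X = (y, z)` into the slow subsystem on `y` and the fast subsystem on `z`. Every `Y_k` has such
a form because `Q` is invertible.
-/

open Matrix

variable {α R : Type*} {p q : ℕ}

namespace Fin

theorem append_inj {a c : Fin p → α} {b d : Fin q → α} :
    append a b = append c d ↔ a = c ∧ b = d :=
  ((appendEquiv p q).injective.eq_iff (a := (a, b)) (b := (c, d))).trans Prod.ext_iff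

theorem append_add_append [Add α] (a c : Fin p → α) (b d : Fin q → α) :
    append a b + append c d = append (a + c) (b + d) := by
  funext i
  refine addCases (fun i => ?_) (fun i => ?_) i <;> simp

end Fin

namespace Matrix

variable [Semiring R]

theorem mulVec_append {m : Type*} (Q : Matrix m (Fin (p + q)) R) (a : Fin p → R) (b : Fin q → R) :
    Q *ᵥ Fin.append a b =
      Q.submatrix id (Fin.castAdd q) *ᵥ a + Q.submatrix id (Fin.natAdd p) *ᵥ b := by
  ext i
  simp [mulVec, dotProduct, Fin.sum_univ_add]

theorem mulVec_eq_append {n : Type*} [Fintype n] (P : Matrix (Fin (p + q)) n R) (v : n → R) :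
    P *ᵥ v =
      Fin.append (P.submatrix (Fin.castAdd q) id *ᵥ v) (P.submatrix (Fin.natAdd p) id *ᵥ v) :=
  Fin.append_castAdd_natAdd.symm

theorem fromBlocks_submatrix_mulVec_append (A : Matrix (Fin p) (Fin p) R)
    (B : Matrix (Fin p) (Fin q) R) (C : Matrix (Fin q) (Fin p) R) (D : Matrix (Fin q) (Fin q) R)
    (a : Fin p → R) (b : Fin q → R) :
    (fromBlocks A B C D).submatrix finSumFinEquiv.symm finSumFinEquiv.symm *ᵥ Fin.append a b =
      Fin.append (A *ᵥ a + B *ᵥ b) (C *ᵥ a + D *ᵥ b) := by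
  have h : Fin.append a b ∘ finSumFinEquiv = Sum.elim a b := Fin.append_comp_sumElim
  ext i
  refine Fin.addCases (fun i => ?_) (fun i => ?_) i <;>
    simp [submatrix_mulVec_equiv, h, fromBlocks_mulVec]

theorem mulVec_mulVec_eq_iff_conj {l m n : Type*} [Fintype l] [Fintype m] [DecidableEq m]
    [Fintype n] {P : Matrix m m R} (hP : IsUnit P) (F G : Matrix m n R) (Q : Matrix n l R)
    (x x' : l → R) (v : m → R) :
    F *ᵥ (Q *ᵥ x) = G *ᵥ (Q *ᵥ x') + v ↔ (P * F * Q) *ᵥ x = (P * G * Q) *ᵥ x' + P *ᵥ v := by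
  rw [← (mulVec_injective_of_isUnit hP).eq_iff]
  simp only [mulVec_add, mulVec_mulVec, Matrix.mul_assoc]

end Matrix

theorem weierstrass_step_iff [Semiring R] {F G P Q : Matrix (Fin (p + q)) (Fin (p + q)) R}
    (hP : IsUnit P) {J : Matrix (Fin p) (Fin p) R} {H : Matrix (Fin q) (Fin q) R}
    (hF : P * F * Q = (fromBlocks 1 0 0 H).submatrix finSumFinEquiv.symm finSumFinEquiv.symm)
    (hG : P * G * Q = (fromBlocks J 0 0 1).submatrix finSumFinEquiv.symm finSumFinEquiv.symm)
    (a a' : Fin p → R) (b b' : Fin q → R) (v : Fin (p + q) → R) :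
    F *ᵥ (Q *ᵥ Fin.append a b) = G *ᵥ (Q *ᵥ Fin.append a' b') + v ↔
      a = J *ᵥ a' + P.submatrix (Fin.castAdd q) id *ᵥ v ∧
        H *ᵥ b = b' + P.submatrix (Fin.natAdd p) id *ᵥ v := by
  rw [mulVec_mulVec_eq_iff_conj hP, hF, hG, fromBlocks_submatrix_mulVec_append,
    fromBlocks_submatrix_mulVec_append, mulVec_eq_append P v, Fin.append_add_append,
    Fin.append_inj]
  simp

theorem stmt13_general {p q : ℕ}
    (F G P Q : Matrix (Fin (p + q)) (Fin (p + q)) ℝ)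
    (hP : IsUnit P) (hQ : IsUnit Q)
    (J : Matrix (Fin p) (Fin p) ℝ) (H : Matrix (Fin q) (Fin q) ℝ)
    (hF : P * F * Q = (Matrix.fromBlocks 1 0 0 H).submatrix finSumFinEquiv.symm finSumFinEquiv.symm)
    (hG : P * G * Q = (Matrix.fromBlocks J 0 0 1).submatrix finSumFinEquiv.symm finSumFinEquiv.symm)
    (Qp : Matrix (Fin (p + q)) (Fin p) ℝ) (hQp : Qp = Q.submatrix id (Fin.castAdd q))
    (Qq : Matrix (Fin (p + q)) (Fin q) ℝ) (hQq : Qq = Q.submatrix id (Fin.natAdd p))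
    (P₁ : Matrix (Fin p) (Fin (p + q)) ℝ) (hP₁ : P₁ = P.submatrix (Fin.castAdd q) id)
    (P₂ : Matrix (Fin q) (Fin (p + q)) ℝ) (hP₂ : P₂ = P.submatrix (Fin.natAdd p) id)
    (V : ℕ → Fin (p + q) → ℝ) (Y : ℕ → Fin (p + q) → ℝ) :
    (∀ k, F.mulVec (Y (k + 1)) = G.mulVec (Y k) + V k) ↔
    (∃ (y : ℕ → Fin p → ℝ) (z : ℕ → Fin q → ℝ),
      (∀ k, Y k = Qp.mulVec (y k) + Qq.mulVec (z k)) ∧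
      (∀ k, y (k + 1) = J.mulVec (y k) + P₁.mulVec (V k)) ∧
      (∀ k, H.mulVec (z (k + 1)) = z k + P₂.mulVec (V k))) := by
  subst hQp hQq hP₁ hP₂
  simp only [← mulVec_append]
  constructor
  · intro hY
    have hsplit : ∀ u, ∃ a b, u = Q *ᵥ Fin.append a b := fun u => by
      obtain ⟨x, rfl⟩ := mulVec_surjective_iff_isUnit.mpr hQ u
      exact ⟨_, _, by rw [Fin.append_castAdd_natAdd]⟩
    choose y z hyz using fun k => hsplit (Y k)
    simp only [hyz, weierstrass_step_iff hP hF hG] at hY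
    exact ⟨y, z, hyz, fun k => (hY k).1, fun k => (hY k).2⟩
  · rintro ⟨y, z, hyz, hy, hz⟩ k
    rw [hyz, hyz, weierstrass_step_iff hP hF hG]
    exact ⟨hy k, hz k⟩

theorem stmt13 {p q : ℕ}
    (F G P Q : Matrix (Fin (p + q)) (Fin (p + q)) ℝ)
    (hP : IsUnit P) (hQ : IsUnit Q)
    (J : Matrix (Fin p) (Fin p) ℝ) (H : Matrix (Fin q) (Fin q) ℝ)
    (hH : IsNilpotent H)
    (hF : P * F * Q = (Matrix.fromBlocks 1 0 0 H).submatrix finSumFinEquiv.symm finSumFinEquiv.symm)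
    (hG : P * G * Q = (Matrix.fromBlocks J 0 0 1).submatrix finSumFinEquiv.symm finSumFinEquiv.symm)
    (Qp : Matrix (Fin (p + q)) (Fin p) ℝ) (hQp : Qp = Q.submatrix id (Fin.castAdd q))
    (Qq : Matrix (Fin (p + q)) (Fin q) ℝ) (hQq : Qq = Q.submatrix id (Fin.natAdd p))
    (P₁ : Matrix (Fin p) (Fin (p + q)) ℝ) (hP₁ : P₁ = P.submatrix (Fin.castAdd q) id)
    (P₂ : Matrix (Fin q) (Fin (p + q)) ℝ) (hP₂ : P₂ = P.submatrix (Fin.natAdd p) id)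
    (V : ℕ → Fin (p + q) → ℝ) (Y : ℕ → Fin (p + q) → ℝ) :
    (∀ k, F.mulVec (Y (k + 1)) = G.mulVec (Y k) + V k) ↔
    (∃ (y : ℕ → Fin p → ℝ) (z : ℕ → Fin q → ℝ),
      (∀ k, Y k = Qp.mulVec (y k) + Qq.mulVec (z k)) ∧
      (∀ k, y (k + 1) = J.mulVec (y k) + P₁.mulVec (V k)) ∧
      (∀ k, H.mulVec (z (k + 1)) = z k + P₂.mulVec (V k))) :=
  stmt13_general F G P Q hP hQ J H hF hG Qp hQp Qq hQq P₁ hP₁ P₂ hP₂ V Y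
end

section
/- With the Weierstrass decomposition as above and input V_k, any solution of F Y_{k+1} = G Y_k + V_k is uniquely determined by its value Y_0, provided Y_0 is consistent; explicitly, Y_k = Q_p J^k z₀ + Q_p ∑_{i=0}^{k-1} J^{k-i-1} P₁ V_i − Q_q ∑_{i=0}^{q*-1} H^i P₂ V_{k+i}, where z₀ ∈ ℝ^p is the unique vector with Y_0 = Q_p z₀ − Q_q ∑_{i=0}^{q*-1} H^i P₂ V_i. -/
set_option maxHeartbeats 1000000

open Matrix

private lemma mulVec_sum' {n m : Type*} [Fintype m] (A : Matrix n m ℝ) (s : Finset ℕ)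
    (f : ℕ → m → ℝ) : A *ᵥ (∑ i ∈ s, f i) = ∑ i ∈ s, A *ᵥ f i := by
  rw [← Matrix.mulVecLin_apply, map_sum]
  simp [Matrix.mulVecLin_apply]

private lemma submatrix_mulVec_id {n m l : Type*} [Fintype m] (A : Matrix n m ℝ)
    (f : l → n) (v : m → ℝ) : (A.submatrix f id) *ᵥ v = fun i => (A *ᵥ v) (f i) := rfl

private lemma split_vec {p q : ℕ} (x : Fin (p + q) → ℝ) :
    x = Sum.elim (fun i => x (Fin.castAdd q i)) (fun i => x (Fin.natAdd p i)) ∘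
      ⇑(finSumFinEquiv (m := p) (n := q)).symm := by
  funext j
  rcases h : finSumFinEquiv.symm j with i | i <;>
  · have hj : j = finSumFinEquiv (finSumFinEquiv.symm j) := (Equiv.apply_symm_apply _ _).symm
    rw [h] at hj
    simp [Function.comp, h, hj, finSumFinEquiv_apply_left, finSumFinEquiv_apply_right]

private lemma split_mulVec {p q : ℕ} (Q : Matrix (Fin (p + q)) (Fin (p + q)) ℝ)
    (a : Fin p → ℝ) (b : Fin q → ℝ) :
    Q *ᵥ (Sum.elim a b ∘ ⇑(finSumFinEquiv (m := p) (n := q)).symm) =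
      (Q.submatrix id (Fin.castAdd q)) *ᵥ a + (Q.submatrix id (Fin.natAdd p)) *ᵥ b := by
  funext i
  simp only [Matrix.mulVec, dotProduct, Pi.add_apply, Matrix.submatrix_apply, id, Function.comp_apply]
  rw [← Fintype.sum_equiv (finSumFinEquiv (m := p) (n := q))
      (fun s => Q i (finSumFinEquiv s) * Sum.elim a b s)
      (fun j => Q i j * Sum.elim a b (finSumFinEquiv.symm j))
      (fun s => by simp)]
  rw [Fintype.sum_sum_type]
  simp [finSumFinEquiv_apply_left, finSumFinEquiv_apply_right]

theorem stmt14 {p q qs : ℕ}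
    (F G P Q : Matrix (Fin (p + q)) (Fin (p + q)) ℝ)
    (hP : IsUnit P) (hQ : IsUnit Q)
    (J : Matrix (Fin p) (Fin p) ℝ) (H : Matrix (Fin q) (Fin q) ℝ)
    (hH : H ^ qs = 0)
    (hF : P * F * Q = (Matrix.fromBlocks 1 0 0 H).submatrix finSumFinEquiv.symm finSumFinEquiv.symm)
    (hG : P * G * Q = (Matrix.fromBlocks J 0 0 1).submatrix finSumFinEquiv.symm finSumFinEquiv.symm)
    (Qp : Matrix (Fin (p + q)) (Fin p) ℝ) (hQp : Qp = Q.submatrix id (Fin.castAdd q))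
    (Qq : Matrix (Fin (p + q)) (Fin q) ℝ) (hQq : Qq = Q.submatrix id (Fin.natAdd p))
    (P₁ : Matrix (Fin p) (Fin (p + q)) ℝ) (hP₁ : P₁ = P.submatrix (Fin.castAdd q) id)
    (P₂ : Matrix (Fin q) (Fin (p + q)) ℝ) (hP₂ : P₂ = P.submatrix (Fin.natAdd p) id)
    (V : ℕ → Fin (p + q) → ℝ) (Y : ℕ → Fin (p + q) → ℝ)
    (hY : ∀ k, F.mulVec (Y (k + 1)) = G.mulVec (Y k) + V k)
    (z₀ : Fin p → ℝ)
    (hz₀ : Y 0 = Qp.mulVec z₀ -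
      Qq.mulVec (∑ i ∈ Finset.range qs, (H ^ i).mulVec (P₂.mulVec (V i)))) :
    (∀ z₀' : Fin p → ℝ,
      Y 0 = Qp.mulVec z₀' -
        Qq.mulVec (∑ i ∈ Finset.range qs, (H ^ i).mulVec (P₂.mulVec (V i))) → z₀' = z₀)
    ∧ ∀ k, Y k = Qp.mulVec ((J ^ k).mulVec z₀)
        + Qp.mulVec (∑ i ∈ Finset.range k, (J ^ (k - i - 1)).mulVec (P₁.mulVec (V i)))
        - Qq.mulVec (∑ i ∈ Finset.range qs, (H ^ i).mulVec (P₂.mulVec (V (k + i)))) := by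
  have hQdet : IsUnit Q.det := (Matrix.isUnit_iff_isUnit_det Q).mp hQ
  set e := finSumFinEquiv (m := p) (n := q) with he
  -- decomposition of Y k
  set u : ℕ → Fin (p + q) → ℝ := fun k => Q⁻¹ *ᵥ Y k with hu
  have hQu : ∀ k, Q *ᵥ u k = Y k := by
    intro k
    simp [hu, Matrix.mulVec_mulVec, Matrix.mul_nonsing_inv Q hQdet]
  set z : ℕ → Fin p → ℝ := fun k i => u k (Fin.castAdd q i) with hz
  set w : ℕ → Fin q → ℝ := fun k i => u k (Fin.natAdd p i) with hw
  have husplit : ∀ k, u k = Sum.elim (z k) (w k) ∘ ⇑e.symm := fun k => split_vec (u k)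
  have hYk : ∀ k, Y k = Qp *ᵥ z k + Qq *ᵥ w k := by
    intro k
    rw [← hQu k, husplit k, split_mulVec, ← hQp, ← hQq]
  -- injectivity of Qp
  have hinj : ∀ a a' : Fin p → ℝ, Qp *ᵥ a = Qp *ᵥ a' → a = a' := by
    intro a a' h
    have h2 : Q *ᵥ (Sum.elim a (0 : Fin q → ℝ) ∘ ⇑e.symm) =
        Q *ᵥ (Sum.elim a' (0 : Fin q → ℝ) ∘ ⇑e.symm) := by
      rw [split_mulVec, split_mulVec, ← hQp, Matrix.mulVec_zero, add_zero, add_zero, h]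
    have h3 : (Sum.elim a (0 : Fin q → ℝ) ∘ ⇑e.symm) =
        (Sum.elim a' (0 : Fin q → ℝ) ∘ ⇑e.symm) := by
      have := congrArg (fun v => Q⁻¹ *ᵥ v) h2
      simpa [Matrix.mulVec_mulVec, Matrix.nonsing_inv_mul Q hQdet] using this
    funext i
    have := congrFun h3 (e (Sum.inl i))
    simpa using this
  -- the transformed recurrence
  have hrec : ∀ k, (Matrix.fromBlocks 1 0 0 H *ᵥ Sum.elim (z (k+1)) (w (k+1))) ∘ ⇑e.symm
      = (Matrix.fromBlocks J 0 0 1 *ᵥ Sum.elim (z k) (w k)) ∘ ⇑e.symm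
        + Sum.elim (P₁ *ᵥ V k) (P₂ *ᵥ V k) ∘ ⇑e.symm := by
    intro k
    have hMQ : ∀ (M : Matrix (Fin (p + q)) (Fin (p + q)) ℝ) (k : ℕ),
        (M * Q) *ᵥ u k = M *ᵥ Y k := fun M k => by
      rw [← Matrix.mulVec_mulVec, hQu]
    have h1 : (P * F * Q) *ᵥ u (k + 1) = (P * G * Q) *ᵥ u k + P *ᵥ V k := by
      rw [hMQ (P * F), hMQ (P * G), ← Matrix.mulVec_mulVec, ← Matrix.mulVec_mulVec,
        hY k, Matrix.mulVec_add]
    rw [hF, hG, husplit, husplit] at h1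
    have hPV : P *ᵥ V k = Sum.elim (P₁ *ᵥ V k) (P₂ *ᵥ V k) ∘ ⇑e.symm := by
      rw [hP₁, hP₂, submatrix_mulVec_id, submatrix_mulVec_id]
      exact split_vec (P *ᵥ V k)
    rw [hPV] at h1
    rw [Matrix.submatrix_mulVec_equiv, Matrix.submatrix_mulVec_equiv] at h1
    have hcomp : ∀ (x : Fin p ⊕ Fin q → ℝ), (x ∘ ⇑e.symm) ∘ ⇑e.symm.symm = x := by
      intro x; funext s; simp
    rw [hcomp, hcomp] at h1
    exact h1
  have hzrec : ∀ k, z (k + 1) = J *ᵥ z k + P₁ *ᵥ V k := by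
    intro k
    funext i
    have := congrFun (hrec k) (e (Sum.inl i))
    simpa [Matrix.fromBlocks_mulVec, Matrix.one_mulVec, Matrix.zero_mulVec] using this
  have hwrec : ∀ k, H *ᵥ w (k + 1) = w k + P₂ *ᵥ V k := by
    intro k
    funext i
    have := congrFun (hrec k) (e (Sum.inr i))
    simpa [Matrix.fromBlocks_mulVec, Matrix.one_mulVec, Matrix.zero_mulVec] using this
  -- explicit formula for w
  have hwaux : ∀ n k, w k = (H ^ n) *ᵥ w (k + n)
      - ∑ i ∈ Finset.range n, (H ^ i) *ᵥ (P₂ *ᵥ V (k + i)) := by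
    intro n
    induction n with
    | zero => intro k; simp
    | succ n ih =>
      intro k
      have h1 : w k = H *ᵥ w (k + 1) - P₂ *ᵥ V k := by
        rw [hwrec k]; abel
      rw [h1, ih (k + 1)]
      rw [Matrix.mulVec_sub, Matrix.mulVec_mulVec, mulVec_sum']
      rw [Finset.sum_range_succ' (fun i => (H ^ i) *ᵥ (P₂ *ᵥ V (k + i))) n]
      have hpow : H * H ^ n = H ^ (n + 1) := (pow_succ' H n).symm
      rw [hpow]
      have : ∀ i, H *ᵥ (H ^ i) *ᵥ (P₂ *ᵥ V (k + 1 + i)) = (H ^ (i + 1)) *ᵥ (P₂ *ᵥ V (k + (i + 1))) := by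
        intro i
        rw [Matrix.mulVec_mulVec, (pow_succ' H i).symm]
        have : k + 1 + i = k + (i + 1) := by omega
        rw [this]
      rw [Finset.sum_congr rfl (fun i _ => this i)]
      have harg : k + 1 + n = k + (n + 1) := by omega
      rw [harg]
      simp only [pow_zero, Matrix.one_mulVec, Nat.add_zero]
      abel
  have hwval : ∀ k, w k = -(∑ i ∈ Finset.range qs, (H ^ i) *ᵥ (P₂ *ᵥ V (k + i))) := by
    intro k
    rw [hwaux qs k, hH, Matrix.zero_mulVec, zero_sub]
  -- identify z 0 with z₀
  have hz00 : z 0 = z₀ := by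
    apply hinj
    have h1 : Y 0 = Qp *ᵥ z 0 + Qq *ᵥ w 0 := hYk 0
    rw [hwval 0] at h1
    simp only [zero_add] at h1
    rw [hz₀] at h1
    rw [Matrix.mulVec_neg] at h1
    have := h1
    rw [sub_eq_add_neg] at this
    exact add_right_cancel this.symm
  -- explicit formula for z
  have hzval : ∀ k, z k = (J ^ k) *ᵥ z₀
      + ∑ i ∈ Finset.range k, (J ^ (k - i - 1)) *ᵥ (P₁ *ᵥ V i) := by
    intro k
    induction k with
    | zero => simp [hz00]
    | succ k ih =>
      rw [hzrec k, ih, Matrix.mulVec_add, Matrix.mulVec_mulVec, mulVec_sum',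
        ← pow_succ']
      rw [Finset.sum_range_succ (fun i => (J ^ (k + 1 - i - 1)) *ᵥ (P₁ *ᵥ V i)) k]
      have h1 : ∀ i ∈ Finset.range k, J *ᵥ (J ^ (k - i - 1)) *ᵥ (P₁ *ᵥ V i)
          = (J ^ (k + 1 - i - 1)) *ᵥ (P₁ *ᵥ V i) := by
        intro i hi
        rw [Finset.mem_range] at hi
        rw [Matrix.mulVec_mulVec, ← pow_succ']
        have : k + 1 - i - 1 = k - i - 1 + 1 := by omega
        rw [this]
      rw [Finset.sum_congr rfl h1]
      have h2 : k + 1 - k - 1 = 0 := by omega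
      rw [h2, pow_zero, Matrix.one_mulVec]
      abel
  constructor
  · intro z₀' hz₀'
    apply hinj
    rw [hz₀] at hz₀'
    exact sub_left_inj.mp hz₀'.symm
  · intro k
    rw [hYk k, hzval k, hwval k, Matrix.mulVec_add, Matrix.mulVec_neg]
    abel
end

section
/- Consistency characterization: with notation as above, the initial value problem F Y_{k+1} = G Y_k + V_k, Y_0 given, has a solution if and only if Y_0 + Q_q ∑_{i=0}^{q*-1} H^i P₂ V_i lies in the column span of Q_p. -/
/-!
Substituting `Y = Q z` and multiplying by `P` turns `F Y_{k+1} = G Y_k + V_k` into the decoupled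
system `x_{k+1} = J x_k + P₁ V_k`, `H w_{k+1} = w_k + P₂ V_k` for `z = (x, w)`. The slow part is
solvable from any `x_0`. Iterating the fast part gives `w_k = H^n w_{k+n} - ∑_{i<n} H^i P₂ V_{k+i}`,
so nilpotency forces `w_0 = -∑_{i<q*} H^i P₂ V_i`, and conversely `w_k = -∑_{i<q*} H^i P₂ V_{k+i}`
is a solution. Hence `Y_0 = Q_p x_0 + Q_q w_0` is consistent exactly when
`Y_0 + Q_q ∑_{i<q*} H^i P₂ V_i ∈ range Q_p`.
-/

open Finset

namespace Module.End

variable {R M : Type*} [Semiring R] [AddCommGroup M] [Module R M] {f : Module.End R M}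
  {w g : ℕ → M} {n : ℕ}

theorem eq_pow_apply_sub_sum_of_recurrence (hw : ∀ k, f (w (k + 1)) = w k + g k) (n k : ℕ) :
    w k = (f ^ n) (w (k + n)) - ∑ i ∈ range n, (f ^ i) (g (k + i)) := by
  induction n with
  | zero => simp
  | succ n ih =>
    have hstep : w (k + n) = f (w (k + (n + 1))) - g (k + n) := by
      rw [← add_assoc, hw]; abel
    rw [ih, hstep, map_sub, ← Module.End.mul_apply, ← pow_succ, sum_range_succ]
    abel

theorem eq_neg_sum_of_recurrence (hf : f ^ n = 0) (hw : ∀ k, f (w (k + 1)) = w k + g k) :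
    w 0 = -∑ i ∈ range n, (f ^ i) (g i) := by
  simpa [hf] using eq_pow_apply_sub_sum_of_recurrence hw n 0

theorem apply_neg_sum_succ (hf : f ^ n = 0) (g : ℕ → M) (k : ℕ) :
    f (-∑ i ∈ range n, (f ^ i) (g (k + 1 + i))) = -∑ i ∈ range n, (f ^ i) (g (k + i)) + g k := by
  have hshift := sum_range_succ' (fun i ↦ (f ^ i) (g (k + i))) n
  rw [sum_range_succ, hf, LinearMap.zero_apply, add_zero] at hshift
  rw [hshift, map_neg, map_sum]
  simp only [← Module.End.mul_apply, ← pow_succ', add_assoc, add_comm 1, pow_zero,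
    Module.End.one_apply, add_zero]
  abel

theorem exists_recurrence_iff (hf : f ^ n = 0) (g : ℕ → M) (c : M) :
    (∃ w : ℕ → M, w 0 = c ∧ ∀ k, f (w (k + 1)) = w k + g k) ↔
      c = -∑ i ∈ range n, (f ^ i) (g i) :=
  ⟨fun ⟨_, hw0, hw⟩ ↦ hw0 ▸ eq_neg_sum_of_recurrence hf hw, fun hc ↦
    ⟨fun k ↦ -∑ i ∈ range n, (f ^ i) (g (k + i)), by simpa using hc.symm, apply_neg_sum_succ hf g⟩⟩

end Module.End

namespace Fin

variable {α : Sort*} {p q : ℕ}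

@[simp]
theorem append_comp_castAdd (u : Fin p → α) (v : Fin q → α) : append u v ∘ castAdd q = u :=
  funext <| append_left u v

@[simp]
theorem append_comp_natAdd (u : Fin p → α) (v : Fin q → α) : append u v ∘ natAdd p = v :=
  funext <| append_right u v

theorem funext_iff_castAdd_natAdd {u v : Fin (p + q) → α} :
    u = v ↔ u ∘ castAdd q = v ∘ castAdd q ∧ u ∘ natAdd p = v ∘ natAdd p := by
  refine ⟨by rintro rfl; simp, fun ⟨h₁, h₂⟩ ↦ funext fun i ↦ ?_⟩
  induction i using addCases with
  | left i => exact congrFun h₁ i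
  | right i => exact congrFun h₂ i

end Fin

namespace Matrix

theorem exists_mulVec_recurrence_iff {R n : Type*} [CommRing R] [Fintype n] [DecidableEq n]
    {H : Matrix n n R} {N : ℕ} (hH : H ^ N = 0) (g : ℕ → n → R) (c : n → R) :
    (∃ w : ℕ → n → R, w 0 = c ∧ ∀ k, H *ᵥ w (k + 1) = w k + g k) ↔
      c = -∑ i ∈ range N, (H ^ i) *ᵥ g i := by
  have hf : toLin' H ^ N = 0 := by rw [← toLin'_pow, hH, map_zero]
  simpa only [← toLin'_pow, toLin'_apply] using Module.End.exists_recurrence_iff hf g c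

theorem mulVec_recurrence_iff_of_isUnit {R l m n : Type*} [Semiring R] [Fintype l] [Fintype m]
    [Fintype n] [DecidableEq m] {P : Matrix m m R} (hP : IsUnit P) (F G : Matrix m n R)
    (Q : Matrix n l R) (w v : l → R) (r : m → R) :
    F *ᵥ (Q *ᵥ w) = G *ᵥ (Q *ᵥ v) + r ↔ (P * F * Q) *ᵥ w = (P * G * Q) *ᵥ v + P *ᵥ r := by
  rw [← (mulVec_injective_of_isUnit hP).eq_iff]
  simp only [mulVec_add, mulVec_mulVec, Matrix.mul_assoc]

theorem exists_recurrence_iff_of_isUnit {R n : Type*} [CommRing R] [Fintype n] [DecidableEq n]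
    {F G P Q : Matrix n n R} (hP : IsUnit P) (hQ : IsUnit Q) (V : ℕ → n → R) (Y₀ : n → R) :
    (∃ Y : ℕ → n → R, Y 0 = Y₀ ∧ ∀ k, F *ᵥ Y (k + 1) = G *ᵥ Y k + V k) ↔
      ∃ z : ℕ → n → R, Q *ᵥ z 0 = Y₀ ∧
        ∀ k, (P * F * Q) *ᵥ z (k + 1) = (P * G * Q) *ᵥ z k + P *ᵥ V k := by
  rw [(mulVec_surjective_iff_isUnit.2 hQ).comp_left.exists]
  simp only [Function.comp_apply, mulVec_recurrence_iff_of_isUnit hP]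

section FinSplit

variable {R : Type*} {p q : ℕ}

theorem mulVec_eq_submatrix_castAdd_add_submatrix_natAdd [NonUnitalNonAssocSemiring R]
    {m : Type*} (M : Matrix m (Fin (p + q)) R) (z : Fin (p + q) → R) :
    M *ᵥ z = M.submatrix id (Fin.castAdd q) *ᵥ (z ∘ Fin.castAdd q) +
      M.submatrix id (Fin.natAdd p) *ᵥ (z ∘ Fin.natAdd p) := by
  ext i
  simp [mulVec, dotProduct, Fin.sum_univ_add]

theorem fromBlocks_submatrix_finSumFinEquiv_mulVec [NonUnitalNonAssocSemiring R] {m n : ℕ}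
    (A : Matrix (Fin m) (Fin p) R) (B : Matrix (Fin m) (Fin q) R) (C : Matrix (Fin n) (Fin p) R)
    (D : Matrix (Fin n) (Fin q) R) (z : Fin (p + q) → R) :
    (fromBlocks A B C D).submatrix finSumFinEquiv.symm finSumFinEquiv.symm *ᵥ z =
      Fin.append (A *ᵥ (z ∘ Fin.castAdd q) + B *ᵥ (z ∘ Fin.natAdd p))
        (C *ᵥ (z ∘ Fin.castAdd q) + D *ᵥ (z ∘ Fin.natAdd p)) := by
  rw [submatrix_mulVec_equiv, fromBlocks_mulVec, Equiv.symm_symm]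
  ext i
  induction i using Fin.addCases <;> simp [Function.comp_def]

theorem weierstrass_mulVec_iff [Semiring R] (J : Matrix (Fin p) (Fin p) R)
    (H : Matrix (Fin q) (Fin q) R) (z' z b : Fin (p + q) → R) :
    (fromBlocks 1 0 0 H).submatrix finSumFinEquiv.symm finSumFinEquiv.symm *ᵥ z' =
        (fromBlocks J 0 0 1).submatrix finSumFinEquiv.symm finSumFinEquiv.symm *ᵥ z + b ↔
      z' ∘ Fin.castAdd q = J *ᵥ (z ∘ Fin.castAdd q) + b ∘ Fin.castAdd q ∧
        H *ᵥ (z' ∘ Fin.natAdd p) = z ∘ Fin.natAdd p + b ∘ Fin.natAdd p := by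
  rw [fromBlocks_submatrix_finSumFinEquiv_mulVec, fromBlocks_submatrix_finSumFinEquiv_mulVec,
    Fin.funext_iff_castAdd_natAdd]
  simp only [Pi.add_comp, Fin.append_comp_castAdd, Fin.append_comp_natAdd, one_mulVec,
    zero_mulVec, add_zero, zero_add]

theorem exists_weierstrass_recurrence_iff [CommRing R] {J : Matrix (Fin p) (Fin p) R}
    {H : Matrix (Fin q) (Fin q) R} {N : ℕ} (hH : H ^ N = 0) (b : ℕ → Fin (p + q) → R)
    (c : Fin (p + q) → R) :
    (∃ z : ℕ → Fin (p + q) → R, z 0 = c ∧ ∀ k,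
        (fromBlocks 1 0 0 H).submatrix finSumFinEquiv.symm finSumFinEquiv.symm *ᵥ z (k + 1) =
          (fromBlocks J 0 0 1).submatrix finSumFinEquiv.symm finSumFinEquiv.symm *ᵥ z k + b k) ↔
      c ∘ Fin.natAdd p = -∑ i ∈ range N, (H ^ i) *ᵥ (b i ∘ Fin.natAdd p) := by
  simp only [weierstrass_mulVec_iff]
  rw [← exists_mulVec_recurrence_iff hH]
  constructor
  · rintro ⟨z, rfl, hz⟩
    exact ⟨fun k ↦ z k ∘ Fin.natAdd p, rfl, fun k ↦ (hz k).2⟩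
  · rintro ⟨w, hw0, hw⟩
    let x : ℕ → Fin p → R := fun k ↦
      Nat.rec (c ∘ Fin.castAdd q) (fun k xk ↦ J *ᵥ xk + b k ∘ Fin.castAdd q) k
    refine ⟨fun k ↦ Fin.append (x k) (w k), ?_, fun k ↦ ⟨?_, ?_⟩⟩
    · simp [Fin.funext_iff_castAdd_natAdd, x, hw0]
    · simp [x]
    · simpa using hw k

end FinSplit

end Matrix

open Matrix in
theorem stmt15_general {p q qs : ℕ}
    (F G P Q : Matrix (Fin (p + q)) (Fin (p + q)) ℝ)
    (hP : IsUnit P) (hQ : IsUnit Q)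
    (J : Matrix (Fin p) (Fin p) ℝ) (H : Matrix (Fin q) (Fin q) ℝ)
    (hH : H ^ qs = 0)
    (hF : P * F * Q = (Matrix.fromBlocks 1 0 0 H).submatrix finSumFinEquiv.symm finSumFinEquiv.symm)
    (hG : P * G * Q = (Matrix.fromBlocks J 0 0 1).submatrix finSumFinEquiv.symm finSumFinEquiv.symm)
    (Qp : Matrix (Fin (p + q)) (Fin p) ℝ) (hQp : Qp = Q.submatrix id (Fin.castAdd q))
    (Qq : Matrix (Fin (p + q)) (Fin q) ℝ) (hQq : Qq = Q.submatrix id (Fin.natAdd p))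
    (P₂ : Matrix (Fin q) (Fin (p + q)) ℝ) (hP₂ : P₂ = P.submatrix (Fin.natAdd p) id)
    (V : ℕ → Fin (p + q) → ℝ) (Y₀ : Fin (p + q) → ℝ) :
    (∃ Y : ℕ → Fin (p + q) → ℝ, Y 0 = Y₀ ∧
      ∀ k, F.mulVec (Y (k + 1)) = G.mulVec (Y k) + V k) ↔
    (∃ x : Fin p → ℝ,
      Y₀ + Qq.mulVec (∑ i ∈ Finset.range qs, (H ^ i).mulVec (P₂.mulVec (V i))) =
        Qp.mulVec x) := by
  subst hQp hQq hP₂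
  have hP₂V (i : ℕ) : P.submatrix (Fin.natAdd p) id *ᵥ V i = (P *ᵥ V i) ∘ Fin.natAdd p :=
    submatrix_mulVec_equiv P (V i) (Fin.natAdd p) (Equiv.refl _)
  simp only [hP₂V]
  rw [exists_recurrence_iff_of_isUnit hP hQ, hF, hG]
  set s := ∑ i ∈ range qs, (H ^ i) *ᵥ ((P *ᵥ V i) ∘ Fin.natAdd p)
  constructor
  · rintro ⟨z, rfl, hz⟩
    have hz0 := (exists_weierstrass_recurrence_iff hH _ _).1 ⟨z, rfl, hz⟩
    refine ⟨z 0 ∘ Fin.castAdd q, ?_⟩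
    rw [mulVec_eq_submatrix_castAdd_add_submatrix_natAdd Q, hz0, mulVec_neg]
    abel
  · rintro ⟨x, hx⟩
    obtain ⟨z, hz0, hz⟩ := (exists_weierstrass_recurrence_iff hH (fun k ↦ P *ᵥ V k)
      (Fin.append x (-s))).2 (Fin.append_comp_natAdd _ _)
    refine ⟨z, ?_, hz⟩
    rw [hz0, mulVec_eq_submatrix_castAdd_add_submatrix_natAdd Q, Fin.append_comp_castAdd,
      Fin.append_comp_natAdd, ← hx, mulVec_neg]
    abel

theorem stmt15 {p q qs : ℕ}
    (F G P Q : Matrix (Fin (p + q)) (Fin (p + q)) ℝ)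
    (hP : IsUnit P) (hQ : IsUnit Q)
    (J : Matrix (Fin p) (Fin p) ℝ) (H : Matrix (Fin q) (Fin q) ℝ)
    (hH : H ^ qs = 0)
    (hF : P * F * Q = (Matrix.fromBlocks 1 0 0 H).submatrix finSumFinEquiv.symm finSumFinEquiv.symm)
    (hG : P * G * Q = (Matrix.fromBlocks J 0 0 1).submatrix finSumFinEquiv.symm finSumFinEquiv.symm)
    (Qp : Matrix (Fin (p + q)) (Fin p) ℝ) (hQp : Qp = Q.submatrix id (Fin.castAdd q))
    (Qq : Matrix (Fin (p + q)) (Fin q) ℝ) (hQq : Qq = Q.submatrix id (Fin.natAdd p))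
    (P₁ : Matrix (Fin p) (Fin (p + q)) ℝ) (hP₁ : P₁ = P.submatrix (Fin.castAdd q) id)
    (P₂ : Matrix (Fin q) (Fin (p + q)) ℝ) (hP₂ : P₂ = P.submatrix (Fin.natAdd p) id)
    (V : ℕ → Fin (p + q) → ℝ) (Y₀ : Fin (p + q) → ℝ) :
    (∃ Y : ℕ → Fin (p + q) → ℝ, Y 0 = Y₀ ∧
      ∀ k, F.mulVec (Y (k + 1)) = G.mulVec (Y k) + V k) ↔
    (∃ x : Fin p → ℝ,
      Y₀ + Qq.mulVec (∑ i ∈ Finset.range qs, (H ^ i).mulVec (P₂.mulVec (V i))) =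
        Qp.mulVec x) :=
  stmt15_general F G P Q hP hQ J H hH hF hG Qp hQp Qq hQq P₂ hP₂ V Y₀
end
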